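/- Suppose at time t: R(t) ∈ SO(3) with bᵢ = R(t) eᵢ, Ṙ(t) = R(t) Ω̂, ṗ(t) = v(t), m v̇(t) = f b₃ − m g e₃, J Ω̇(t) + Ω × (J Ω) = τ with J = diag(J₁,J₂,J₃), and ρ = ‖p(t)‖ > 0 (no constraints assumed). Then the residual curves are differentiable at t with derivatives: d/dt(e₃ ⋅ v) = (f/m) s₃ − g; d/dt(Ω₃ − v₂/ρ) = ((J₁ − J₂)/J₃) Ω₁ Ω₂ + τ₃/J₃ − (Ω₁ v₃ − Ω₃ v₁ − g s₂)/ρ + v₂ (p̂ ⋅ v)/ρ²; and d/dt(Ω₂ + v₃/ρ) = ((J₃ − J₁)/J₂) Ω₃ Ω₁ + τ₂/J₂ + (Ω₂ v₁ − Ω₁ v₂ + f/m − g s₃)/ρ − v₃ (p̂ ⋅ v)/ρ², where Ωᵢ = eᵢ ⋅ Ω, vᵢ = bᵢ ⋅ v, τᵢ = eᵢ ⋅ τ, s₂ = e₃ ⋅ b₂, s₃ = e₃ ⋅ b₃, p̂ = p/ρ. -/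

import Mathlib

open Matrix

/-!
Each residual is differentiated by the product and quotient rules. The kinematics `Ṙ = R Ω̂`
turn the derivative of a body axis `bᵢ = R eᵢ` into `R (Ω × eᵢ)`, so
`d/dt (bᵢ ⋅ v) = R (Ω × eᵢ) ⋅ v + bᵢ ⋅ v̇`. Newton's law `v̇ = (f/m) b₃ − g e₃` together with the
orthonormality of the body axes gives `bᵢ ⋅ v̇`, Euler's equations give `Ω̇₂` and `Ω̇₃`, and
`ρ̇ = p̂ ⋅ v`.
-/

/-- Standard basis vectors of `ℝ³ = Fin 3 → ℝ` (so `e 0 = e₁`, `e 1 = e₂`, `e 2 = e₃`). -/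
def e (i : Fin 3) : Fin 3 → ℝ := Pi.single i 1

/-- `SO(3)`: real 3×3 matrices with `RᵀR = I` and `det R = 1`. -/
def SO3 (R : Matrix (Fin 3) (Fin 3) ℝ) : Prop := Rᵀ * R = 1 ∧ R.det = 1

/-- The Euclidean norm on `ℝ³ = Fin 3 → ℝ`. -/
noncomputable def enorm3 (x : Fin 3 → ℝ) : ℝ := Real.sqrt (x ⬝ᵥ x)

/-- The hat map: `hat Ω` is the skew-symmetric matrix with `(hat Ω) y = Ω × y`. -/
def hat (Ω : Fin 3 → ℝ) : Matrix (Fin 3) (Fin 3) ℝ :=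
  !![0, -Ω 2, Ω 1; Ω 2, 0, -Ω 0; -Ω 1, Ω 0, 0]

attribute [local instance] Matrix.normedAddCommGroup Matrix.normedSpace

section Calculus

variable {ι κ : Type*} [Fintype κ] {t : ℝ}

theorem HasDerivAt.dotProduct [Fintype ι] {u w : ℝ → ι → ℝ} {u' w' : ι → ℝ}
    (hu : HasDerivAt u u' t) (hw : HasDerivAt w w' t) :
    HasDerivAt (fun s => u s ⬝ᵥ w s) (u' ⬝ᵥ w t + u t ⬝ᵥ w') t := by
  have h : HasDerivAt (fun s => ∑ i, u s i * w s i) (∑ i, (u' i * w t i + u t i * w' i)) t :=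
    HasDerivAt.fun_sum fun i _ => (hasDerivAt_pi.1 hu i).mul (hasDerivAt_pi.1 hw i)
  rw [Finset.sum_add_distrib] at h
  exact h

theorem HasDerivAt.mulVec_const {A : ℝ → Matrix ι κ ℝ} {A' : Matrix ι κ ℝ}
    (hA : HasDerivAt A A' t) (x : κ → ℝ) :
    HasDerivAt (fun s => A s *ᵥ x) (A' *ᵥ x) t :=
  hasDerivAt_pi.2 fun i =>
    HasDerivAt.fun_sum fun j _ => (hasDerivAt_pi.1 (hasDerivAt_pi.1 hA i) j).mul_const (x j)

theorem hasDerivAt_enorm3 {p : ℝ → Fin 3 → ℝ} {p' : Fin 3 → ℝ}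
    (hp : HasDerivAt p p' t) (hρ : 0 < enorm3 (p t)) :
    HasDerivAt (fun s => enorm3 (p s)) ((p t ⬝ᵥ p') / enorm3 (p t)) t := by
  simp only [enorm3] at hρ ⊢
  convert (hp.dotProduct hp).sqrt (Real.sqrt_pos.1 hρ).ne' using 1
  rw [dotProduct_comm p']
  field_simp
  ring

theorem HasDerivAt.div_enorm3 {N : ℝ → ℝ} {N' : ℝ} {p : ℝ → Fin 3 → ℝ} {p' : Fin 3 → ℝ}
    (hN : HasDerivAt N N' t) (hp : HasDerivAt p p' t) (hρ : 0 < enorm3 (p t)) :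
    HasDerivAt (fun s => N s / enorm3 (p s))
      (N' / enorm3 (p t) - N t * ((enorm3 (p t))⁻¹ • p t ⬝ᵥ p') / enorm3 (p t) ^ 2) t := by
  refine (hN.div (hasDerivAt_enorm3 hp hρ) hρ.ne').congr_deriv ?_
  rw [smul_dotProduct, smul_eq_mul]
  field_simp

end Calculus

theorem e_dotProduct (i : Fin 3) (x : Fin 3 → ℝ) : e i ⬝ᵥ x = x i := by
  simp [e]

theorem dotProduct_e (x : Fin 3 → ℝ) (i : Fin 3) : x ⬝ᵥ e i = x i := by
  simp [e]

theorem hat_mulVec (Ω y : Fin 3 → ℝ) : hat Ω *ᵥ y = crossProduct Ω y := by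
  ext i
  fin_cases i <;> simp [hat, cross_apply, mulVec, dotProduct, Fin.sum_univ_three] <;> ring

theorem cross_e_one (Ω : Fin 3 → ℝ) : crossProduct Ω (e 1) = Ω 0 • e 2 - Ω 2 • e 0 := by
  ext i
  fin_cases i <;> simp [e, cross_apply]

theorem cross_e_two (Ω : Fin 3 → ℝ) : crossProduct Ω (e 2) = Ω 1 • e 0 - Ω 0 • e 1 := by
  ext i
  fin_cases i <;> simp [e, cross_apply]

theorem mulVec_dotProduct_mulVec_of_transpose_mul_self {n : Type*} [Fintype n] [DecidableEq n]
    {R : Matrix n n ℝ} (hR : Rᵀ * R = 1) (x y : n → ℝ) :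
    (R *ᵥ x) ⬝ᵥ (R *ᵥ y) = x ⬝ᵥ y := by
  rw [dotProduct_mulVec, ← mulVec_transpose, mulVec_mulVec, hR, one_mulVec]

theorem hasDerivAt_body_dotProduct {R : ℝ → Matrix (Fin 3) (Fin 3) ℝ}
    {Ω v : ℝ → Fin 3 → ℝ} {v' : Fin 3 → ℝ} {t : ℝ}
    (hR : HasDerivAt R (R t * hat (Ω t)) t) (hv : HasDerivAt v v' t) (x : Fin 3 → ℝ) :
    HasDerivAt (fun s => (R s *ᵥ x) ⬝ᵥ v s)
      ((R t *ᵥ crossProduct (Ω t) x) ⬝ᵥ v t + (R t *ᵥ x) ⬝ᵥ v') t := by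
  simpa only [← mulVec_mulVec, hat_mulVec] using (hR.mulVec_const x).dotProduct hv

theorem accel_eq_of_newton {m g f : ℝ} {b v' : Fin 3 → ℝ} (hm : m ≠ 0)
    (h : m • v' = f • b - (m * g) • e 2) : v' = (f / m) • b - g • e 2 := by
  apply smul_right_injective _ hm
  simp only [h, smul_sub, smul_smul]
  field_simp

section Euler

variable {J₁ J₂ J₃ : ℝ} {Ω Ω' τ : Fin 3 → ℝ}

theorem angularAccel_two_of_euler (hJ₃ : J₃ ≠ 0)
    (h : diagonal ![J₁, J₂, J₃] *ᵥ Ω' + crossProduct Ω (diagonal ![J₁, J₂, J₃] *ᵥ Ω) = τ) :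
    Ω' 2 = (J₁ - J₂) / J₃ * Ω 0 * Ω 1 + τ 2 / J₃ := by
  have h2 := congrFun h 2
  simp only [cross_apply, mulVec_diagonal, Pi.add_apply, cons_val, cons_val_one, cons_val_zero]
    at h2
  field_simp
  linear_combination h2

theorem angularAccel_one_of_euler (hJ₂ : J₂ ≠ 0)
    (h : diagonal ![J₁, J₂, J₃] *ᵥ Ω' + crossProduct Ω (diagonal ![J₁, J₂, J₃] *ᵥ Ω) = τ) :
    Ω' 1 = (J₃ - J₁) / J₂ * Ω 2 * Ω 0 + τ 1 / J₂ := by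
  have h1 := congrFun h 1
  simp only [cross_apply, mulVec_diagonal, Pi.add_apply, cons_val, cons_val_one, cons_val_zero]
    at h1
  field_simp
  linear_combination h1

end Euler

theorem residual_derivatives_general (m g f J₁ J₂ J₃ : ℝ)
    (hm : 0 < m) (hJ₂ : 0 < J₂) (hJ₃ : 0 < J₃)
    (R : ℝ → Matrix (Fin 3) (Fin 3) ℝ) (p v Ω : ℝ → Fin 3 → ℝ)
    (v' Ω' τ : Fin 3 → ℝ) (t : ℝ)
    (hSO : SO3 (R t))
    (hR : HasDerivAt R (R t * hat (Ω t)) t)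
    (hp : HasDerivAt p (v t) t)
    (hv : HasDerivAt v v' t)
    (hvdyn : m • v' = f • (R t *ᵥ e 2) - (m * g) • e 2)
    (hΩ : HasDerivAt Ω Ω' t)
    (hΩdyn : (Matrix.diagonal ![J₁, J₂, J₃]) *ᵥ Ω' +
      crossProduct (Ω t) ((Matrix.diagonal ![J₁, J₂, J₃]) *ᵥ Ω t) = τ)
    (hρ : 0 < enorm3 (p t)) :
    HasDerivAt (fun s => e 2 ⬝ᵥ v s)
      ((f / m) * (e 2 ⬝ᵥ (R t *ᵥ e 2)) - g) t ∧
    HasDerivAt (fun s => e 2 ⬝ᵥ Ω s - ((R s *ᵥ e 1) ⬝ᵥ v s) / enorm3 (p s))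
      (((J₁ - J₂) / J₃) * (e 0 ⬝ᵥ Ω t) * (e 1 ⬝ᵥ Ω t) + (e 2 ⬝ᵥ τ) / J₃ -
        ((e 0 ⬝ᵥ Ω t) * ((R t *ᵥ e 2) ⬝ᵥ v t) - (e 2 ⬝ᵥ Ω t) * ((R t *ᵥ e 0) ⬝ᵥ v t) -
            g * (e 2 ⬝ᵥ (R t *ᵥ e 1))) / enorm3 (p t) +
        ((R t *ᵥ e 1) ⬝ᵥ v t) * (((enorm3 (p t))⁻¹ • p t) ⬝ᵥ v t) / (enorm3 (p t)) ^ 2) t ∧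
    HasDerivAt (fun s => e 1 ⬝ᵥ Ω s + ((R s *ᵥ e 2) ⬝ᵥ v s) / enorm3 (p s))
      (((J₃ - J₁) / J₂) * (e 2 ⬝ᵥ Ω t) * (e 0 ⬝ᵥ Ω t) + (e 1 ⬝ᵥ τ) / J₂ +
        ((e 1 ⬝ᵥ Ω t) * ((R t *ᵥ e 0) ⬝ᵥ v t) - (e 0 ⬝ᵥ Ω t) * ((R t *ᵥ e 1) ⬝ᵥ v t) +
            f / m - g * (e 2 ⬝ᵥ (R t *ᵥ e 2))) / enorm3 (p t) -
        ((R t *ᵥ e 2) ⬝ᵥ v t) * (((enorm3 (p t))⁻¹ • p t) ⬝ᵥ v t) / (enorm3 (p t)) ^ 2) t := by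
  have hv' := accel_eq_of_newton hm.ne' hvdyn
  have hb := mulVec_dotProduct_mulVec_of_transpose_mul_self hSO.1
  have hb₂₃ : (R t *ᵥ e 1) ⬝ᵥ (R t *ᵥ e 2) = 0 := by rw [hb, e_dotProduct]; simp [e]
  have hb₃₃ : (R t *ᵥ e 2) ⬝ᵥ (R t *ᵥ e 2) = 1 := by rw [hb, e_dotProduct]; simp [e]
  have hΩi : ∀ i, HasDerivAt (fun s => e i ⬝ᵥ Ω s) (Ω' i) t := fun i => by
    simpa only [e_dotProduct] using hasDerivAt_pi.1 hΩ i
  have hbody := hasDerivAt_body_dotProduct hR hv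
  refine ⟨?_, ?_, ?_⟩
  · refine ((hasDerivAt_const t (e 2)).dotProduct hv).congr_deriv ?_
    simp [hv', e]
  · refine ((hΩi 2).sub ((hbody (e 1)).div_enorm3 hp hρ)).congr_deriv ?_
    rw [angularAccel_two_of_euler hJ₃.ne' hΩdyn, cross_e_one, hv']
    simp only [mulVec_sub, mulVec_smul, sub_dotProduct, smul_dotProduct, dotProduct_sub,
      dotProduct_smul, hb₂₃, smul_eq_mul, e_dotProduct, dotProduct_e]
    ring
  · refine ((hΩi 1).add ((hbody (e 2)).div_enorm3 hp hρ)).congr_deriv ?_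
    rw [angularAccel_one_of_euler hJ₂.ne' hΩdyn, cross_e_two, hv']
    simp only [mulVec_sub, mulVec_smul, sub_dotProduct, smul_dotProduct, dotProduct_sub,
      dotProduct_smul, hb₃₃, smul_eq_mul, e_dotProduct, dotProduct_e]
    ring

/-- Off-manifold derivatives of the constraint residuals `μ₁ = e₃ ⋅ v`,
`μ₂ = Ω₃ − v₂/ρ`, `μ₃ = Ω₂ + v₃/ρ` along the quadrotor dynamics (no constraints
assumed), with the explicit formulas of the residual-stabilization construction. -/
theorem residual_derivatives (m g f J₁ J₂ J₃ : ℝ)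
    (hm : 0 < m) (hg : 0 < g) (hJ₁ : 0 < J₁) (hJ₂ : 0 < J₂) (hJ₃ : 0 < J₃)
    (R : ℝ → Matrix (Fin 3) (Fin 3) ℝ) (p v Ω : ℝ → Fin 3 → ℝ)
    (v' Ω' τ : Fin 3 → ℝ) (t : ℝ)
    (hSO : SO3 (R t))
    (hR : HasDerivAt R (R t * hat (Ω t)) t)
    (hp : HasDerivAt p (v t) t)
    (hv : HasDerivAt v v' t)
    (hvdyn : m • v' = f • (R t *ᵥ e 2) - (m * g) • e 2)
    (hΩ : HasDerivAt Ω Ω' t)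
    (hΩdyn : (Matrix.diagonal ![J₁, J₂, J₃]) *ᵥ Ω' +
      crossProduct (Ω t) ((Matrix.diagonal ![J₁, J₂, J₃]) *ᵥ Ω t) = τ)
    (hρ : 0 < enorm3 (p t)) :
    HasDerivAt (fun s => e 2 ⬝ᵥ v s)
      ((f / m) * (e 2 ⬝ᵥ (R t *ᵥ e 2)) - g) t ∧
    HasDerivAt (fun s => e 2 ⬝ᵥ Ω s - ((R s *ᵥ e 1) ⬝ᵥ v s) / enorm3 (p s))
      (((J₁ - J₂) / J₃) * (e 0 ⬝ᵥ Ω t) * (e 1 ⬝ᵥ Ω t) + (e 2 ⬝ᵥ τ) / J₃ -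
        ((e 0 ⬝ᵥ Ω t) * ((R t *ᵥ e 2) ⬝ᵥ v t) - (e 2 ⬝ᵥ Ω t) * ((R t *ᵥ e 0) ⬝ᵥ v t) -
            g * (e 2 ⬝ᵥ (R t *ᵥ e 1))) / enorm3 (p t) +
        ((R t *ᵥ e 1) ⬝ᵥ v t) * (((enorm3 (p t))⁻¹ • p t) ⬝ᵥ v t) / (enorm3 (p t)) ^ 2) t ∧
    HasDerivAt (fun s => e 1 ⬝ᵥ Ω s + ((R s *ᵥ e 2) ⬝ᵥ v s) / enorm3 (p s))
      (((J₃ - J₁) / J₂) * (e 2 ⬝ᵥ Ω t) * (e 0 ⬝ᵥ Ω t) + (e 1 ⬝ᵥ τ) / J₂ +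
        ((e 1 ⬝ᵥ Ω t) * ((R t *ᵥ e 0) ⬝ᵥ v t) - (e 0 ⬝ᵥ Ω t) * ((R t *ᵥ e 1) ⬝ᵥ v t) +
            f / m - g * (e 2 ⬝ᵥ (R t *ᵥ e 2))) / enorm3 (p t) -
        ((R t *ᵥ e 2) ⬝ᵥ v t) * (((enorm3 (p t))⁻¹ • p t) ⬝ᵥ v t) / (enorm3 (p t)) ^ 2) t :=
  residual_derivatives_general m g f J₁ J₂ J₃ hm hJ₂ hJ₃ R p v Ω v' Ω' τ t hSO hR hp hv hvdyn hΩ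
    hΩdyn hρ
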